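/- Minimize L(N, D, ρ) = A·N^{−α} + B·D^{−β}·ρ^{−ν} + E + κ(1−ρ)^μ over N, D > 0 subject to the compute constraint C = 6ND, for fixed C and ρ. The minimizer satisfies N*(C, ρ) = N*(C, 1)·ρ^{ν/(α+β)} and D*(C, ρ) = D*(C, 1)·ρ^{−ν/(α+β)}, where N*(C,1), D*(C,1) denote the optimal allocation at ρ = 1. -/

import Mathlib

open Real

/-- The Information-Resolution Scaling Law. -/
noncomputable def infoResLoss (A B E α β ν κ μ : ℝ) (N D ρ : ℝ) : ℝ :=
  A * N ^ (-α) + B * D ^ (-β) * ρ ^ (-ν) + E + κ * (1 - ρ) ^ μ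

/-!
Along the compute constraint `D = C / (6N)` the loss is `A N^(-α) + k N^β + const` with
`k = B (C/6)^(-β) ρ^(-ν)`. Stationarity at the minimizer gives `N^(α+β) = α A / (β k)`, so
`N*^(α+β)` scales like `ρ^ν`, and `D* = C / (6 N*)` scales inversely.
-/

open Set

lemma rpow_add_eq_of_isMinOn {a k α β x₀ : ℝ} (hk : k ≠ 0) (hβ : β ≠ 0) (hx₀ : 0 < x₀)
    (hmin : IsMinOn (fun x : ℝ => a * x ^ (-α) + k * x ^ β) (Ioi 0) x₀) :
    x₀ ^ (α + β) = α * a / (β * k) := by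
  have hderiv : HasDerivAt (fun x : ℝ => a * x ^ (-α) + k * x ^ β)
      (a * (-α * x₀ ^ (-α - 1)) + k * (β * x₀ ^ (β - 1))) x₀ :=
    ((hasDerivAt_rpow_const (Or.inl hx₀.ne')).const_mul a).add
      ((hasDerivAt_rpow_const (Or.inl hx₀.ne')).const_mul k)
  have hstat := (hmin.isLocalMin (Ioi_mem_nhds hx₀)).hasDerivAt_eq_zero hderiv
  have hsplit : x₀ ^ (α + β) * x₀ ^ (-α - 1) = x₀ ^ (β - 1) := by
    rw [← rpow_add hx₀]; ring_nf
  have hpos : 0 < x₀ ^ (-α - 1) := rpow_pos_of_pos hx₀ _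
  rw [eq_div_iff (mul_ne_zero hβ hk)]
  apply mul_right_cancel₀ hpos.ne'
  linear_combination (β * k) * hsplit + hstat

lemma infoResLoss_compute_constraint {A B E α β ν κ μ C : ℝ} (hC : 0 ≤ C) (r : ℝ) {N : ℝ}
    (hN : 0 < N) :
    infoResLoss A B E α β ν κ μ N (C / (6 * N)) r =
      A * N ^ (-α) + B * (C / 6) ^ (-β) * r ^ (-ν) * N ^ β + (E + κ * (1 - r) ^ μ) := by
  have hD : (C / (6 * N)) ^ (-β) = (C / 6) ^ (-β) * N ^ β := by
    rw [show C / (6 * N) = C / 6 * N⁻¹ by ring, mul_rpow (by positivity) (by positivity),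
      inv_rpow hN.le, rpow_neg hN.le, inv_inv]
  rw [infoResLoss, hD]
  ring

lemma rpow_add_eq_of_compute_optimal {A B E α β ν κ μ C r N₀ D₀ : ℝ} (hB : B ≠ 0) (hβ : β ≠ 0)
    (hC : 0 < C) (hr : 0 < r) (hN₀ : 0 < N₀) (hc : C = 6 * N₀ * D₀)
    (hmin : ∀ N D : ℝ, 0 < N → 0 < D → C = 6 * N * D →
      infoResLoss A B E α β ν κ μ N₀ D₀ r ≤ infoResLoss A B E α β ν κ μ N D r) :
    N₀ ^ (α + β) = α * A / (β * (B * (C / 6) ^ (-β) * r ^ (-ν))) := by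
  have hk : B * (C / 6) ^ (-β) * r ^ (-ν) ≠ 0 := by positivity
  refine rpow_add_eq_of_isMinOn hk hβ hN₀ fun N (hN : 0 < N) => ?_
  have hD₀ : D₀ = C / (6 * N₀) := by rw [hc]; field_simp
  have hle := hmin N (C / (6 * N)) hN (by positivity) (by field_simp)
  rw [hD₀, infoResLoss_compute_constraint hC.le r hN₀,
    infoResLoss_compute_constraint hC.le r hN] at hle
  simpa using hle

theorem compute_optimal_allocation_general
    (A B E α β ν κ μ C ρ : ℝ)
    (hB : 0 < B) (hα : 0 < α) (hβ : 0 < β)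
    (hC : 0 < C) (hρ : ρ ∈ Set.Ioc (0:ℝ) 1)
    (N1 D1 Nρ Dρ : ℝ)
    (hN1 : 0 < N1) (hNρ : 0 < Nρ)
    (hc1 : C = 6 * N1 * D1) (hcρ : C = 6 * Nρ * Dρ)
    (hmin1 : ∀ N D : ℝ, 0 < N → 0 < D → C = 6 * N * D →
      infoResLoss A B E α β ν κ μ N1 D1 1 ≤ infoResLoss A B E α β ν κ μ N D 1)
    (hminρ : ∀ N D : ℝ, 0 < N → 0 < D → C = 6 * N * D →
      infoResLoss A B E α β ν κ μ Nρ Dρ ρ ≤ infoResLoss A B E α β ν κ μ N D ρ) :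
    Nρ = N1 * ρ ^ (ν / (α + β)) ∧ Dρ = D1 * ρ ^ (-(ν / (α + β))) := by
  obtain ⟨hρ0, -⟩ := hρ
  have hfoc1 := rpow_add_eq_of_compute_optimal hB.ne' hβ.ne' hC one_pos hN1 hc1 hmin1
  have hfocρ := rpow_add_eq_of_compute_optimal hB.ne' hβ.ne' hC hρ0 hNρ hcρ hminρ
  have hρν := rpow_pos_of_pos hρ0 ν
  have hrel : Nρ ^ (α + β) = N1 ^ (α + β) * ρ ^ ν := by
    rw [hfocρ, hfoc1, one_rpow, rpow_neg hρ0.le]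
    field_simp
  have hαβ : α + β ≠ 0 := by positivity
  have hN : Nρ = N1 * ρ ^ (ν / (α + β)) := calc
    Nρ = (Nρ ^ (α + β)) ^ (α + β)⁻¹ := (rpow_rpow_inv hNρ.le hαβ).symm
    _ = N1 * ρ ^ (ν / (α + β)) := by
      rw [hrel, mul_rpow (by positivity) hρν.le, rpow_rpow_inv hN1.le hαβ, ← rpow_mul hρ0.le,
        div_eq_mul_inv]
  refine ⟨hN, ?_⟩
  have hρs := rpow_pos_of_pos hρ0 (ν / (α + β))
  rw [rpow_neg hρ0.le, ← div_eq_mul_inv, eq_div_iff hρs.ne']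
  apply mul_left_cancel₀ hN1.ne'
  linear_combination (hc1 - hcρ) / 6 - Dρ * hN

/-- Under the compute constraint C = 6ND, the minimizer of the
info-resolution law at resolution ρ relates to the clean-data (ρ = 1) optimum by
N*(C,ρ) = N*(C,1)·ρ^{ν/(α+β)} and D*(C,ρ) = D*(C,1)·ρ^{−ν/(α+β)}. -/
theorem compute_optimal_allocation
    (A B E α β ν κ μ C ρ : ℝ)
    (hA : 0 < A) (hB : 0 < B) (hE : 0 < E) (hα : 0 < α) (hβ : 0 < β)
    (hν : 0 < ν) (hκ : 0 < κ) (hμ : 0 < μ) (hμ1 : μ ≤ 1)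
    (hC : 0 < C) (hρ : ρ ∈ Set.Ioc (0:ℝ) 1)
    (N1 D1 Nρ Dρ : ℝ)
    (hN1 : 0 < N1) (hD1 : 0 < D1) (hNρ : 0 < Nρ) (hDρ : 0 < Dρ)
    (hc1 : C = 6 * N1 * D1) (hcρ : C = 6 * Nρ * Dρ)
    (hmin1 : ∀ N D : ℝ, 0 < N → 0 < D → C = 6 * N * D →
      infoResLoss A B E α β ν κ μ N1 D1 1 ≤ infoResLoss A B E α β ν κ μ N D 1)
    (hminρ : ∀ N D : ℝ, 0 < N → 0 < D → C = 6 * N * D →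
      infoResLoss A B E α β ν κ μ Nρ Dρ ρ ≤ infoResLoss A B E α β ν κ μ N D ρ) :
    Nρ = N1 * ρ ^ (ν / (α + β)) ∧ Dρ = D1 * ρ ^ (-(ν / (α + β))) :=
  compute_optimal_allocation_general A B E α β ν κ μ C ρ hB hα hβ hC hρ N1 D1 Nρ Dρ hN1 hNρ hc1 hcρ
    hmin1 hminρ
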